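/- arXiv:math/0407235 — 5 statements merged into one kernel-verified Lean document; each statement's English description precedes it below -/
import Mathlib

section
/- If G is a graph of order n and x is any vertex of G, then the equitable chromatic number of G satisfies χ_=(G) ≥ ⌈(n+1)/(α_x(G)+1)⌉. -/
/-! In an equitable `k`-coloring the class of `x` is a stable set containing `x`, so it has at
most `α_x` vertices, and every other class has at most `α_x + 1`; hence
`n ≤ α_x + (k - 1)(α_x + 1) = k (α_x + 1) - 1`. -/

open SimpleGraph Finset

variable {V : Type*}

/-- A stable (independent) set of vertices. -/
def IsStable (G : SimpleGraph V) (S : Finset V) : Prop :=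
  ∀ x ∈ S, ∀ y ∈ S, ¬G.Adj x y

/-- Stability (independence) number. -/
noncomputable def stabNum (G : SimpleGraph V) [Fintype V] : ℕ :=
  sSup {n | ∃ S : Finset V, IsStable G S ∧ S.card = n}

/-- `x`-stability number: max size of a stable set containing `x`. -/
noncomputable def stabNumAt (G : SimpleGraph V) [Fintype V] (x : V) : ℕ :=
  sSup {n | ∃ S : Finset V, IsStable G S ∧ x ∈ S ∧ S.card = n}

/-- Stability number of the subgraph induced on a vertex set `s`. -/
noncomputable def stabNumOn (G : SimpleGraph V) (s : Set V) : ℕ :=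
  sSup {n | ∃ S : Finset V, ↑S ⊆ s ∧ IsStable G S ∧ S.card = n}

/-- `G` admits an equitable `k`-coloring. -/
def EquitablyColorable (G : SimpleGraph V) [Fintype V] (k : ℕ) : Prop :=
  ∃ c : V → Fin k, (∀ a b, G.Adj a b → c a ≠ c b) ∧
    ∀ i j : Fin k,
      (Finset.univ.filter fun v => c v = i).card ≤
        (Finset.univ.filter fun v => c v = j).card + 1

/-- Equitable chromatic number. -/
noncomputable def eqChromNum (G : SimpleGraph V) [Fintype V] : ℕ :=
  sInf {k | EquitablyColorable G k}

lemma card_le_stabNumAt [Fintype V] (G : SimpleGraph V) (x : V) (S : Finset V)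
    (hS : IsStable G S) (hx : x ∈ S) : #S ≤ stabNumAt G x :=
  le_csSup ⟨Fintype.card V, by rintro n ⟨T, -, -, rfl⟩; exact T.card_le_univ⟩ ⟨S, hS, hx, rfl⟩

lemma card_lt_mul_of_balanced [Fintype V] {k : ℕ} (c : V → Fin k)
    (hbal : ∀ i j, #{v | c v = i} ≤ #{v | c v = j} + 1) (i : Fin k) :
    Fintype.card V < k * (#{v | c v = i} + 1) :=
  calc Fintype.card V = ∑ j, #{v | c v = j} :=
        card_eq_sum_card_fiberwise fun v _ => mem_univ (c v)
    _ < ∑ _j : Fin k, (#{v | c v = i} + 1) :=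
        sum_lt_sum (fun j _ => hbal j i) ⟨i, mem_univ i, Nat.lt_add_one _⟩
    _ = k * (#{v | c v = i} + 1) := by simp

lemma EquitablyColorable.card_add_one_le [Fintype V] {G : SimpleGraph V} {k : ℕ}
    (h : EquitablyColorable G k) (x : V) :
    Fintype.card V + 1 ≤ k * (stabNumAt G x + 1) := by
  obtain ⟨c, hc, hbal⟩ := h
  have hstable : IsStable G {v | c v = c x} := fun u hu v hv hadj =>
    hc u v hadj ((mem_filter.1 hu).2.trans (mem_filter.1 hv).2.symm)
  calc Fintype.card V + 1 ≤ k * (#{v | c v = c x} + 1) := card_lt_mul_of_balanced c hbal (c x)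
    _ ≤ k * (stabNumAt G x + 1) := by
        gcongr
        exact card_le_stabNumAt G x _ hstable (by simp)

lemma equitablyColorable_card [Fintype V] (G : SimpleGraph V) :
    EquitablyColorable G (Fintype.card V) := by
  set e := Fintype.equivFin V
  have hfibre : ∀ i, #{v | e v = i} = 1 := fun i =>
    card_eq_one.2 ⟨e.symm i, by ext v; simp [← Equiv.eq_symm_apply]⟩
  refine ⟨e, fun a b hab h => G.ne_of_adj hab (e.injective h), fun i j => ?_⟩
  rw [hfibre, hfibre]
  exact Nat.le_succ 1

lemma equitablyColorable_eqChromNum [Fintype V] (G : SimpleGraph V) :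
    EquitablyColorable G (eqChromNum G) :=
  Nat.sInf_mem (s := {k | EquitablyColorable G k}) ⟨_, equitablyColorable_card G⟩

theorem stmt0 [Fintype V] (G : SimpleGraph V) (x : V) :
    (eqChromNum G : ℤ) ≥
      ⌈((Fintype.card V : ℚ) + 1) / ((stabNumAt G x : ℚ) + 1)⌉ := by
  have h := (equitablyColorable_eqChromNum G).card_add_one_le x
  rw [ge_iff_le, Int.ceil_le, div_le_iff₀ (by positivity)]
  exact_mod_cast h
end

section
/- Let F be a forest and v, x distinct vertices of F. Then α_v(F) ≥ deg(x), where α_v(F) is the maximum size of an independent set containing v. -/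
open SimpleGraph Finset

variable {V : Type*}

lemma acyclic_no_tri {G : SimpleGraph V} (hF : G.IsAcyclic) {x a b : V}
    (hxa : G.Adj x a) (hxb : G.Adj x b) (hab : a ≠ b) : ¬G.Adj a b := by
  intro h
  have hb := (isAcyclic_iff_forall_adj_isBridge.mp hF h)
  rw [isBridge_iff] at hb
  apply hb
  rw [reachable_delete_edges_iff_exists_walk]
  refine ⟨Walk.cons hxa.symm (Walk.cons hxb Walk.nil), ?_⟩
  simp only [Walk.edges_cons, Walk.edges_nil, List.mem_cons, List.not_mem_nil, or_false]
  push_neg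
  constructor <;> simp only [ne_eq, Sym2.eq_iff] <;> push_neg <;>
    aesop

lemma acyclic_no_quad {G : SimpleGraph V} (hF : G.IsAcyclic) {x a b v : V}
    (hxa : G.Adj x a) (hxb : G.Adj x b) (hab : a ≠ b) (hvx : v ≠ x)
    (hva : G.Adj v a) : ¬G.Adj v b := by
  intro h
  have hb := (isAcyclic_iff_forall_adj_isBridge.mp hF h)
  rw [isBridge_iff] at hb
  apply hb
  rw [reachable_delete_edges_iff_exists_walk]
  refine ⟨Walk.cons hva (Walk.cons hxa.symm (Walk.cons hxb Walk.nil)), ?_⟩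
  simp only [Walk.edges_cons, Walk.edges_nil, List.mem_cons, List.not_mem_nil, or_false]
  push_neg
  refine ⟨?_, ?_, ?_⟩ <;> simp only [ne_eq, Sym2.eq_iff] <;> push_neg <;> aesop

theorem stmt5' [Fintype V] (F : SimpleGraph V) [DecidableRel F.Adj]
    (hF : F.IsAcyclic) (v x : V) (hvx : v ≠ x) :
    sSup {n | ∃ S : Finset V, IsStable F S ∧ v ∈ S ∧ S.card = n} ≥ F.degree x := by
  classical
  have bdd : BddAbove {n | ∃ S : Finset V, IsStable F S ∧ v ∈ S ∧ S.card = n} := by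
    refine ⟨Fintype.card V, ?_⟩
    rintro n ⟨S, -, -, rfl⟩
    exact S.card_le_univ
  suffices h : ∃ S : Finset V, IsStable F S ∧ v ∈ S ∧ F.degree x ≤ S.card by
    obtain ⟨S, h1, h2, h3⟩ := h
    exact le_trans h3 (le_csSup bdd ⟨S, h1, h2, rfl⟩)
  set N := F.neighborFinset x with hNdef
  have hN : ∀ a ∈ N, F.Adj x a := fun a ha => (F.mem_neighborFinset x a).mp ha
  have hstab : ∀ a ∈ N, ∀ b ∈ N, ¬F.Adj a b := by
    intro a ha b hb hadj
    rcases eq_or_ne a b with rfl | hne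
    · exact F.irrefl hadj
    · exact acyclic_no_tri hF (hN a ha) (hN b hb) hne hadj
  have hcardN : N.card = F.degree x := F.card_neighborFinset_eq_degree x
  by_cases hv : v ∈ N
  · exact ⟨N, hstab, hv, hcardN.ge⟩
  · set T := N.filter (fun a => F.Adj v a) with hTdef
    by_cases hT : T = ∅
    · refine ⟨insert v N, ?_, Finset.mem_insert_self v N, ?_⟩
      · intro a ha b hb hadj
        have hnoadj : ∀ b ∈ N, ¬F.Adj v b := by
          intro b hb hadj
          have hbT : b ∈ T := Finset.mem_filter.mpr ⟨hb, hadj⟩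
          rw [hT] at hbT
          exact absurd hbT (Finset.notMem_empty b)
        rcases Finset.mem_insert.mp ha with rfl | ha' <;>
          rcases Finset.mem_insert.mp hb with rfl | hb'
        · exact F.irrefl hadj
        · exact hnoadj b hb' hadj
        · exact hnoadj a ha' hadj.symm
        · exact hstab a ha' b hb' hadj
      · rw [Finset.card_insert_of_notMem hv, hcardN]; omega
    · obtain ⟨w, hw⟩ := Finset.nonempty_iff_ne_empty.mpr hT
      obtain ⟨hwN, hvw⟩ := Finset.mem_filter.mp hw
      refine ⟨insert v (N.erase w), ?_, Finset.mem_insert_self _ _, ?_⟩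
      · intro a ha b hb hadj
        have hnoadj : ∀ b ∈ N.erase w, ¬F.Adj v b := by
          intro b hb hadj
          obtain ⟨hbw, hbN⟩ := Finset.mem_erase.mp hb
          exact acyclic_no_quad hF (hN w hwN) (hN b hbN) (Ne.symm hbw) hvx hvw hadj
        rcases Finset.mem_insert.mp ha with rfl | ha' <;>
          rcases Finset.mem_insert.mp hb with rfl | hb'
        · exact F.irrefl hadj
        · exact hnoadj b hb' hadj
        · exact hnoadj a ha' hadj.symm
        · exact hstab a (Finset.mem_of_mem_erase ha') b (Finset.mem_of_mem_erase hb') hadj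
      · have hvne : v ∉ N.erase w := fun h => hv (Finset.mem_of_mem_erase h)
        rw [Finset.card_insert_of_notMem hvne, Finset.card_erase_of_mem hwN, hcardN]
        have : 1 ≤ F.degree x := by rw [← hcardN]; exact Finset.card_pos.mpr ⟨w, hwN⟩
        omega

theorem stmt5 [Fintype V] (F : SimpleGraph V) [DecidableRel F.Adj]
    (hF : F.IsAcyclic) (v x : V) (hvx : v ≠ x) :
    stabNumAt F v ≥ F.degree x :=
  stmt5' F hF v x hvx
end

section
/- Suppose v is a vertex in a forest F of order n. If ⌈(n+1)/(α_v+1)⌉ > 3, then v is the unique vertex of maximum degree Δ(F); i.e., deg(v) > deg(x) for every other vertex x. -/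
open SimpleGraph Finset

variable {V : Type*}

/-!
A forest is 2-colourable, so every vertex set `s` contains a stable subset of size at least
`|s| / 2`; applied to the complement of the closed neighbourhood of `v`, and adding `v`, this gives
`n + 1 ≤ 2 α_v + deg v`. A forest has no triangles and no 4-cycles, so `N(x)` is stable and meets
`N(v)` in at most one vertex; hence `N(x)` (if `v ∈ N(x)`) or `N(x) \ N(v) ∪ {v}` shows
`deg x ≤ α_v` for `x ≠ v`. The hypothesis says `3 (α_v + 1) < n + 1`, so
`deg v ≥ n + 1 - 2 α_v > α_v ≥ deg x`.
-/

namespace IsStable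

variable {G : SimpleGraph V} {S T : Finset V}

theorem mono (hT : IsStable G T) (hST : S ⊆ T) : IsStable G S :=
  fun x hx y hy => hT x (hST hx) y (hST hy)

theorem insert [DecidableEq V] {u : V} (hS : IsStable G S) (hu : ∀ y ∈ S, ¬G.Adj u y) :
    IsStable G (insert u S) := by
  intro a ha b hb hab
  rw [Finset.mem_insert] at ha hb
  obtain rfl | ha := ha
  · obtain rfl | hb := hb
    exacts [G.irrefl hab, hu b hb hab]
  · obtain rfl | hb := hb
    exacts [hu a ha hab.symm, hS a ha b hb hab]

end IsStable

namespace SimpleGraph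

variable {G : SimpleGraph V}

theorem Coloring.isStable_filter {α : Type*} [DecidableEq α] (C : G.Coloring α) (s : Finset V)
    (i : α) : IsStable G (s.filter (C · = i)) := by
  intro a ha b hb hab
  exact C.valid hab ((mem_filter.mp ha).2.trans (mem_filter.mp hb).2.symm)

theorem Colorable.exists_isStable_subset {k : ℕ} (hG : G.Colorable k) (s : Finset V) :
    ∃ T ⊆ s, IsStable G T ∧ #s ≤ k * #T := by
  obtain ⟨C⟩ := hG
  rcases s.eq_empty_or_nonempty with rfl | ⟨u, -⟩
  · exact ⟨∅, subset_refl _, fun _ h => absurd h (notMem_empty _), by simp⟩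
  have : Nonempty (Fin k) := ⟨C u⟩
  obtain ⟨i, -, hi⟩ := exists_max_image univ (fun i => #(s.filter (C · = i))) univ_nonempty
  refine ⟨s.filter (C · = i), filter_subset _ _, C.isStable_filter s i, ?_⟩
  calc #s = ∑ j, #(s.filter (C · = j)) := card_eq_sum_card_fiberwise fun _ _ => mem_univ _
    _ ≤ ∑ _j : Fin k, #(s.filter (C · = i)) := sum_le_sum fun j _ => hi j (mem_univ j)
    _ = k * #(s.filter (C · = i)) := by simp

theorem CliqueFree.isStable_neighborFinset (hG : G.CliqueFree 3) (x : V)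
    [Fintype (G.neighborSet x)] : IsStable G (G.neighborFinset x) := by
  classical
  intro a ha b hb hab
  rw [mem_neighborFinset] at ha hb
  exact hG {x, a, b} (is3Clique_triple_iff.mpr ⟨ha, hb, hab⟩)

theorem IsAcyclic.subsingleton_commonNeighbors (hG : G.IsAcyclic) {x v : V} (hxv : x ≠ v) :
    (G.commonNeighbors x v).Subsingleton := by
  intro a ha b hb
  rw [mem_commonNeighbors] at ha hb
  have hpath : ∀ {c} (hxc : G.Adj x c) (hvc : G.Adj v c),
      (Walk.cons hxc (Walk.cons hvc.symm Walk.nil)).IsPath := by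
    intro c hxc hvc
    simp [Walk.isPath_def, hxc.ne, hvc.ne', hxv]
  have hpq := (hG.subsingleton_path x v).elim ⟨_, hpath ha.1 ha.2⟩ ⟨_, hpath hb.1 hb.2⟩
  simpa using congrArg (fun p : G.Path x v => p.1.support) hpq

variable [Fintype V]

theorem le_stabNumAt {S : Finset V} {v : V} (hS : IsStable G S) (hv : v ∈ S) :
    #S ≤ stabNumAt G v :=
  le_csSup ⟨Fintype.card V, by rintro _ ⟨T, -, -, rfl⟩; exact T.card_le_univ⟩ ⟨S, hS, hv, rfl⟩

variable [DecidableRel G.Adj]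

theorem Colorable.card_add_le_mul_stabNumAt_add_degree {k : ℕ} (hG : G.Colorable k) (v : V) :
    Fintype.card V + k ≤ k * stabNumAt G v + G.degree v + 1 := by
  classical
  set N := insert v (G.neighborFinset v)
  obtain ⟨T, hTN, hT, hcard⟩ := hG.exists_isStable_subset Nᶜ
  have hvT : v ∉ T := fun hv => mem_compl.mp (hTN hv) (mem_insert_self v _)
  have hvT_stable : IsStable G (insert v T) := hT.insert fun y hy hvy =>
    mem_compl.mp (hTN hy) (mem_insert_of_mem ((mem_neighborFinset G v y).mpr hvy))
  have hα : #T + 1 ≤ stabNumAt G v := by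
    simpa [card_insert_of_notMem hvT] using le_stabNumAt hvT_stable (mem_insert_self v T)
  have hN : #Nᶜ + (G.degree v + 1) = Fintype.card V := by
    rw [← card_compl_add_card N, card_insert_of_notMem (notMem_neighborFinset_self G v),
      card_neighborFinset_eq_degree]
  nlinarith

theorem IsAcyclic.degree_le_stabNumAt (hG : G.IsAcyclic) {x v : V} (hxv : x ≠ v) :
    G.degree x ≤ stabNumAt G v := by
  classical
  set N := G.neighborFinset x
  have hN : IsStable G N := (hG.cliqueFree le_rfl).isStable_neighborFinset x
  by_cases hvN : v ∈ N
  · exact le_stabNumAt hN hvN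
  set M := G.neighborFinset v
  have hNM : #(N ∩ M) ≤ 1 := card_le_one.mpr fun a ha b hb => by
    simp only [N, M, mem_inter, mem_neighborFinset] at ha hb
    exact hG.subsingleton_commonNeighbors hxv ha hb
  have hT : IsStable G (insert v (N \ M)) := (hN.mono sdiff_subset).insert fun y hy hvy =>
    (mem_sdiff.mp hy).2 ((mem_neighborFinset G v y).mpr hvy)
  have hα := le_stabNumAt hT (mem_insert_self v _)
  rw [card_insert_of_notMem fun h => hvN (mem_sdiff.mp h).1] at hα
  have hsplit := card_sdiff_add_card_inter N M
  have hdeg : #N = G.degree x := G.card_neighborFinset_eq_degree x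
  omega

end SimpleGraph

theorem stmt7 [Fintype V] (F : SimpleGraph V) [DecidableRel F.Adj]
    (hF : F.IsAcyclic) (v : V)
    (h : 3 < ⌈((Fintype.card V : ℚ) + 1) / ((stabNumAt F v : ℚ) + 1)⌉) :
    ∀ x : V, x ≠ v → F.degree x < F.degree v := by
  intro x hxv
  have hα : 3 * (stabNumAt F v + 1) < Fintype.card V + 1 := by
    have h' := Int.lt_ceil.mp h
    rw [lt_div_iff₀ (by positivity)] at h'
    exact_mod_cast h'
  have hx := hF.degree_le_stabNumAt hxv
  have hv := hF.colorable_two.card_add_le_mul_stabNumAt_add_degree v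
  omega
end

section
/- Every tree T of order n ≥ 2 whose bipartition (A,B) satisfies ||A|−|B|| ≤ 1 is equitably 2-colorable, and hence equitably k-colorable for all k ≥ 2. -/
open SimpleGraph Finset

variable {V : Type*}

lemma IsStable.subset {G : SimpleGraph V} {S T : Finset V} (h : IsStable G T) (hs : S ⊆ T) :
    IsStable G S := fun x hx y hy => h x (hs hx) y (hs hy)

/-- there is a `y`-subset with average-bounded sum -/

lemma exists_small_subset [DecidableEq V] (f : V → ℕ) :
    ∀ (y : ℕ) (s : Finset V), y ≤ s.card →
      ∃ t ⊆ s, t.card = y ∧ s.card * (∑ v ∈ t, f v) ≤ y * (∑ v ∈ s, f v) := by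
  intro y
  induction y with
  | zero => intro s _; exact ⟨∅, empty_subset _, card_empty, by simp⟩
  | succ y ih =>
    intro s hy
    have hne : s.Nonempty := card_pos.mp (by omega)
    obtain ⟨a, ha, hmin⟩ := s.exists_min_image f hne
    have hcard : y ≤ (s.erase a).card := by
      rw [card_erase_of_mem ha]; omega
    obtain ⟨t, hts, htc, hsum⟩ := ih (s.erase a) hcard
    refine ⟨insert a t, ?_, ?_, ?_⟩
    · intro v hv
      rcases mem_insert.mp hv with rfl | hv
      · exact ha
      · exact erase_subset _ _ (hts hv)
    · rw [card_insert_of_notMem (fun hat => (mem_erase.mp (hts hat)).1 rfl), htc]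
    · have hanot : a ∉ t := fun hat => (mem_erase.mp (hts hat)).1 rfl
      rw [sum_insert hanot]
      have hsplit : ∑ v ∈ s, f v = f a + ∑ v ∈ s.erase a, f v := by
        rw [← Finset.add_sum_erase _ _ ha]
      have hcards : s.card = (s.erase a).card + 1 := by
        rw [card_erase_of_mem ha]
        have : 1 ≤ s.card := hne.card_pos
        omega
      -- key: (card s - 1 - y) * f a ≤ ∑_{erase \ t} f
      have hrem : ((s.erase a).card - y) * f a ≤ ∑ v ∈ s.erase a \ t, f v := by
        have h1 : (s.erase a \ t).card = (s.erase a).card - y := by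
          rw [card_sdiff_of_subset hts, htc]
        calc ((s.erase a).card - y) * f a = ∑ _v ∈ s.erase a \ t, f a := by
              rw [sum_const, smul_eq_mul, h1, mul_comm]
          _ ≤ ∑ v ∈ s.erase a \ t, f v := by
              apply sum_le_sum
              intro i hi
              exact hmin i (erase_subset _ _ (sdiff_subset hi))
      have hsd : (∑ v ∈ s.erase a \ t, f v) + ∑ v ∈ t, f v = ∑ v ∈ s.erase a, f v :=
        sum_sdiff hts
      obtain ⟨D, hD⟩ : ∃ D, (s.erase a).card = y + D := ⟨_, (Nat.add_sub_cancel' hcard).symm⟩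
      rw [hsplit, hcards, hD]
      rw [hD] at hsum hrem
      simp only [Nat.add_sub_cancel_left] at hrem
      nlinarith [hsum, hrem, hsd]

lemma exists_split [DecidableEq V] :
    ∀ (t : ℕ) (d : ℕ → ℕ) (s : Finset V), (∑ i ∈ range t, d i) = s.card →
      ∃ f : ℕ → Finset V,
        (∀ i, i < t → (f i).card = d i) ∧ (∀ i, i < t → f i ⊆ s) ∧
        (∀ v ∈ s, ∃ i, i < t ∧ v ∈ f i) ∧
        (∀ i j, i < j → j < t → Disjoint (f i) (f j)) := by
  intro t
  induction t with
  | zero =>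
    intro d s hs
    simp only [range_zero, sum_empty] at hs
    refine ⟨fun _ => ∅, by omega, by omega, ?_, by omega⟩
    intro v hv
    rw [eq_comm, card_eq_zero] at hs
    simp [hs] at hv
  | succ t ih =>
    intro d s hs
    rw [sum_range_succ] at hs
    have hdt : d t ≤ s.card := by omega
    obtain ⟨u, hus, huc⟩ := exists_subset_card_eq hdt
    have hrest : (∑ i ∈ range t, d i) = (s \ u).card := by
      rw [card_sdiff_of_subset hus, huc]; omega
    obtain ⟨f, hfc, hfs, hfcov, hfd⟩ := ih d (s \ u) hrest
    refine ⟨fun i => if i = t then u else f i, ?_, ?_, ?_, ?_⟩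
    · intro i hi
      by_cases h : i = t
      · simp [h, huc]
      · simpa [h] using hfc i (by omega)
    · intro i hi
      by_cases h : i = t
      · simpa [h] using hus
      · simpa [h] using (hfs i (by omega)).trans sdiff_subset
    · intro v hv
      by_cases h : v ∈ u
      · exact ⟨t, by omega, by simp [h]⟩
      · obtain ⟨i, hi, hvi⟩ := hfcov v (mem_sdiff.mpr ⟨hv, h⟩)
        exact ⟨i, by omega, by simp [Nat.ne_of_lt hi, hvi]⟩
    · intro i j hij hj
      by_cases h : j = t
      · subst h
        simp only [if_pos rfl, if_neg (Nat.ne_of_lt hij)]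
        exact Finset.disjoint_of_subset_left (hfs i hij) Finset.sdiff_disjoint
      · have hi : i ≠ t := by omega
        simpa [h, hi] using hfd i j hij (by omega)

lemma deg_eq_filter [Fintype V] [DecidableEq V] (T : SimpleGraph V) [DecidableRel T.Adj]
    (A : Finset V) (hA : ∀ w, T.Adj v w → w ∈ A) :
    T.degree v = ∑ w ∈ A, (if T.Adj v w then 1 else 0) := by
  rw [← card_neighborFinset_eq_degree, sum_boole]
  congr 1
  ext w
  simp only [mem_neighborFinset, mem_filter]
  exact ⟨fun h => ⟨hA w h, h⟩, fun h => h.2⟩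

lemma degsum_side [Fintype V] [DecidableEq V] (T : SimpleGraph V) [DecidableRel T.Adj]
    (A : Finset V) (hA : IsStable T A) (hB : IsStable T Aᶜ) :
    2 * ∑ b ∈ Aᶜ, T.degree b = ∑ v : V, T.degree v := by
  have hsplit : ∑ v : V, T.degree v = (∑ v ∈ A, T.degree v) + ∑ v ∈ Aᶜ, T.degree v :=
    (Finset.sum_add_sum_compl A _).symm
  have hAdeg : ∑ v ∈ A, T.degree v = ∑ v ∈ A, ∑ w ∈ Aᶜ, (if T.Adj v w then 1 else 0) := by
    apply sum_congr rfl
    intro v hv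
    apply deg_eq_filter
    intro w hw
    by_contra hwA
    exact hA v hv w (by simpa using hwA) hw
  have hBdeg : ∑ v ∈ Aᶜ, T.degree v = ∑ v ∈ Aᶜ, ∑ w ∈ A, (if T.Adj v w then 1 else 0) := by
    apply sum_congr rfl
    intro v hv
    apply deg_eq_filter
    intro w hw
    by_contra hwA
    exact hB v hv w (by simpa using hwA) hw
  have hcomm : ∑ v ∈ A, ∑ w ∈ Aᶜ, (if T.Adj v w then 1 else 0)
      = ∑ w ∈ Aᶜ, ∑ v ∈ A, (if T.Adj w v then 1 else 0) := by
    rw [Finset.sum_comm]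
    apply sum_congr rfl
    intro w _
    apply sum_congr rfl
    intro v _
    simp [T.adj_comm]
  rw [hsplit, hAdeg, hBdeg, hcomm]
  ring

lemma exists_mixed [Fintype V] [DecidableEq V] (T : SimpleGraph V) [DecidableRel T.Adj]
    (A : Finset V) (hA : IsStable T A) (hB : IsStable T Aᶜ)
    (hdeg : ∑ b ∈ Aᶜ, T.degree b + 1 = Fintype.card V)
    (x y : ℕ) (hy : y ≤ Aᶜ.card) (hp : 1 ≤ Aᶜ.card)
    (hxy : 2 * y + x ≤ A.card) (hbal : A.card ≤ Aᶜ.card + 1) :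
    ∃ SA SB : Finset V, SA ⊆ A ∧ SB ⊆ Aᶜ ∧ SA.card = x ∧ SB.card = y ∧
      IsStable T (SA ∪ SB) := by
  obtain ⟨t, hts, htc, hsum⟩ := exists_small_subset (fun v => T.degree v) y Aᶜ hy
  have hmn : A.card + Aᶜ.card = Fintype.card V := by
    rw [card_add_card_compl]
  have hB1 : ∑ v ∈ Aᶜ, T.degree v = Fintype.card V - 1 := by omega
  have hsum2 : Aᶜ.card * (∑ v ∈ t, T.degree v) ≤ Aᶜ.card * (A.card - x) := by
    calc Aᶜ.card * (∑ v ∈ t, T.degree v) ≤ y * (∑ v ∈ Aᶜ, T.degree v) := hsum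
      _ = y * (Fintype.card V - 1) := by rw [hB1]
      _ ≤ y * (2 * Aᶜ.card) := Nat.mul_le_mul_left y (by omega)
      _ = (2 * y) * Aᶜ.card := by ring
      _ ≤ (A.card - x) * Aᶜ.card := Nat.mul_le_mul_right _ (by omega)
      _ = Aᶜ.card * (A.card - x) := mul_comm _ _
  have hdegle : (∑ v ∈ t, T.degree v) ≤ A.card - x :=
    Nat.le_of_mul_le_mul_left hsum2 (by omega)
  set N := t.biUnion (fun v => T.neighborFinset v) with hN
  have hNcard : N.card ≤ ∑ v ∈ t, T.degree v := by
    simpa using card_biUnion_le (s := t) (t := fun v => T.neighborFinset v)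
  have hAN : x ≤ (A \ N).card := by
    have h1 := le_card_sdiff N A
    omega
  obtain ⟨SA, hSA, hSAc⟩ := exists_subset_card_eq hAN
  refine ⟨SA, t, fun v hv => (mem_sdiff.mp (hSA hv)).1, hts, hSAc, htc, ?_⟩
  intro u hu w hw hadj
  rcases mem_union.mp hu with hu | hu <;> rcases mem_union.mp hw with hw | hw
  · exact hA u ((mem_sdiff.mp (hSA hu)).1) w ((mem_sdiff.mp (hSA hw)).1) hadj
  · exact (mem_sdiff.mp (hSA hu)).2 (mem_biUnion.mpr ⟨w, hw, (mem_neighborFinset _ _ _).mpr hadj.symm⟩)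
  · exact (mem_sdiff.mp (hSA hw)).2 (mem_biUnion.mpr ⟨u, hu, (mem_neighborFinset _ _ _).mpr hadj⟩)
  · exact hB u (hts hu) w (hts hw) hadj

lemma main_colorable [Fintype V] [DecidableEq V] (T : SimpleGraph V) [DecidableRel T.Adj]
    (hn : 2 ≤ Fintype.card V) (A : Finset V) (hA : IsStable T A) (hB : IsStable T Aᶜ)
    (hdegB : ∑ b ∈ Aᶜ, T.degree b + 1 = Fintype.card V)
    (hdegA : ∑ b ∈ A, T.degree b + 1 = Fintype.card V)
    (hm : Aᶜ.card ≤ A.card) (hbal : A.card ≤ Aᶜ.card + 1)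
    (k : ℕ) (hk : 3 ≤ k) : EquitablyColorable T k := by
  have hmp : A.card + Aᶜ.card = Fintype.card V := by
    rw [card_add_card_compl]
  have hp1 : 1 ≤ Aᶜ.card := by
    by_contra h
    have h0 : Aᶜ.card = 0 := by omega
    rw [card_eq_zero] at h0
    rw [h0] at hdegB
    simp at hdegB
    omega
  set n := Fintype.card V with hn_def
  set q := n / k with hq_def
  set r := n % k with hr_def
  have hqr : k * q + r = n := Nat.div_add_mod n k
  have hrk : r < k := Nat.mod_lt _ (by omega)
  set d : ℕ → ℕ := fun i => if i < r then q + 1 else q with hd_def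
  have hS : ∀ j, ∑ i ∈ range j, d i = j * q + min j r := by
    intro j
    induction j with
    | zero => simp
    | succ j ih =>
      rw [sum_range_succ, ih]
      have hmul : (j + 1) * q = j * q + q := by ring
      by_cases hjr : j < r
      · rw [show d j = q + 1 from if_pos hjr]; omega
      · rw [show d j = q from if_neg hjr]; omega
  have hSk : ∑ i ∈ range k, d i = n := by
    rw [hS, Nat.min_eq_right (Nat.le_of_lt hrk)]; exact hqr
  -- find the pivot index a
  have hex : ∃ j, A.card < ∑ i ∈ range (j + 1), d i := by
    refine ⟨k - 1, ?_⟩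
    rw [show k - 1 + 1 = k by omega, hSk]
    omega
  set a := Nat.find hex with ha_def
  have ha1 : A.card < ∑ i ∈ range (a + 1), d i := Nat.find_spec hex
  have hak : a < k := by
    have hle : a ≤ k - 1 := Nat.find_le (by
      rw [show k - 1 + 1 = k by omega, hSk]; omega)
    omega
  have ha2 : ∑ i ∈ range a, d i ≤ A.card := by
    rcases Nat.eq_zero_or_pos a with ha0 | hapos
    · rw [ha0]; simp
    · have := Nat.find_min hex (m := a - 1) (by omega)
      rw [show a - 1 + 1 = a by omega] at this
      omega
  have hSa1 : ∑ i ∈ range (a + 1), d i = ∑ i ∈ range a, d i + d a := sum_range_succ d a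
  set x := A.card - ∑ i ∈ range a, d i with hx_def
  set y := (∑ i ∈ range a, d i + d a) - A.card with hy_def
  have hxy_sum : x + y = d a := by omega
  have hy1 : 1 ≤ y := by omega
  have hmono : ∑ i ∈ range (a + 1), d i ≤ n := by
    rw [← hSk]
    exact sum_le_sum_of_subset (range_subset_range.mpr (by omega))
  have hyp : y ≤ Aᶜ.card := by omega
  have hxm : x ≤ A.card := by omega
  have hda_le : d a ≤ q + 1 := by rw [hd_def]; dsimp only; split <;> omega
  -- arithmetic disjunction
  have hdisj : x = 0 ∨ 2 * y + x ≤ A.card ∨ 2 * x + y ≤ Aᶜ.card := by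
    by_contra hcon
    push_neg at hcon
    obtain ⟨hx1, hcm, hcp⟩ := hcon
    have hd3 : n + 2 ≤ 3 * d a := by omega
    have h3q : 3 * q ≤ k * q := Nat.mul_le_mul_right q hk
    by_cases har : a < r
    · have hda1 : d a = q + 1 := if_pos har
      have hr1 : r ≤ 1 := by omega
      have ha0 : a = 0 := by omega
      have hS0 : ∑ i ∈ range a, d i = 0 := by rw [ha0]; simp
      have hxm2 : x = A.card := by omega
      have hmq : A.card < q + 1 := by
        have h := ha1
        rw [ha0, show (0:ℕ) + 1 = 1 from rfl, sum_range_one] at h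
        rwa [show d 0 = q + 1 from if_pos (ha0 ▸ har)] at h
      omega
    · have hda1 : d a = q := if_neg har
      omega
  -- obtain the mixed class
  have hmixed : ∃ SA SB : Finset V, SA ⊆ A ∧ SB ⊆ Aᶜ ∧ SA.card = x ∧ SB.card = y ∧
      IsStable T (SA ∪ SB) := by
    rcases hdisj with h0 | hA2 | hB2
    · obtain ⟨SB, hSBs, hSBc⟩ := exists_subset_card_eq hyp
      refine ⟨∅, SB, empty_subset _, hSBs, by simp [h0], hSBc, ?_⟩
      exact hB.subset (by simpa using hSBs)
    · exact exists_mixed T A hA hB hdegB x y hyp hp1 hA2 hbal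
    · have e1 : Aᶜᶜ = A := compl_compl A
      have hB' : IsStable T Aᶜᶜ := by rw [e1]; exact hA
      have hdeg' : ∑ b ∈ Aᶜᶜ, T.degree b + 1 = Fintype.card V := by rw [e1]; exact hdegA
      have hx' : x ≤ Aᶜᶜ.card := by rw [e1]; exact hxm
      have hp' : 1 ≤ Aᶜᶜ.card := by rw [e1]; omega
      have hbal' : Aᶜ.card ≤ Aᶜᶜ.card + 1 := by rw [e1]; omega
      obtain ⟨SB, SA, hSBs, hSAs, hSBc, hSAc, hst⟩ :=
        exists_mixed T Aᶜ hB hB' hdeg' y x hx' hp' hB2 hbal'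
      refine ⟨SA, SB, by rwa [e1] at hSAs, hSBs, hSAc, hSBc, ?_⟩
      rwa [union_comm]
  obtain ⟨SA, SB, hSAs, hSBs, hSAc, hSBc, hstab⟩ := hmixed
  -- split the remainder of A and of B
  have hcA : ∑ i ∈ range a, d i = (A \ SA).card := by
    rw [card_sdiff_of_subset hSAs, hSAc]; omega
  obtain ⟨fA, hfAc, hfAs, hfAcov, hfAd⟩ := exists_split a d (A \ SA) hcA
  have hIco : ∑ i ∈ range (a + 1), d i + ∑ i ∈ Ico (a + 1) k, d i = n := by
    have h := sum_Ico_consecutive d (Nat.zero_le (a + 1)) (show a + 1 ≤ k by omega)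
    rw [← range_eq_Ico] at h
    rw [← hSk, h, range_eq_Ico]
  have hshift : ∑ i ∈ Ico (a + 1) k, d i = ∑ i ∈ range (k - (a + 1)), d (a + 1 + i) :=
    sum_Ico_eq_sum_range d (a + 1) k
  have hcB : ∑ i ∈ range (k - (a + 1)), d (a + 1 + i) = (Aᶜ \ SB).card := by
    rw [card_sdiff_of_subset hSBs, hSBc, ← hshift]
    omega
  obtain ⟨fB, hfBc, hfBs, hfBcov, hfBd⟩ :=
    exists_split (k - (a + 1)) (fun i => d (a + 1 + i)) (Aᶜ \ SB) hcB
  -- the color classes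
  set P : ℕ → Finset V := fun i =>
    if i < a then fA i else if i = a then SA ∪ SB else fB (i - (a + 1)) with hP_def
  have hPlt : ∀ i, i < a → P i = fA i := by intro i hi; simp [hP_def, hi]
  have hPeq : P a = SA ∪ SB := by simp [hP_def]
  have hPgt : ∀ i, a < i → P i = fB (i - (a + 1)) := by
    intro i hi
    simp [hP_def, Nat.lt_asymm hi, Nat.ne_of_gt hi]
  have hdisjAB : Disjoint SA SB :=
    disjoint_of_subset_left hSAs (disjoint_of_subset_right hSBs disjoint_compl_right)
  have hPcard : ∀ i, i < k → (P i).card = d i := by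
    intro i hik
    rcases lt_trichotomy i a with hi | rfl | hi
    · rw [hPlt i hi, hfAc i hi]
    · rw [hPeq, card_union_of_disjoint hdisjAB, hSAc, hSBc]; omega
    · rw [hPgt i hi, hfBc _ (by omega)]
      congr 1
      omega
  have hPstable : ∀ i, i < k → IsStable T (P i) := by
    intro i hik
    rcases lt_trichotomy i a with hi | rfl | hi
    · rw [hPlt i hi]
      exact hA.subset ((hfAs i hi).trans sdiff_subset)
    · rw [hPeq]; exact hstab
    · rw [hPgt i hi]
      exact hB.subset ((hfBs _ (by omega)).trans sdiff_subset)
  have hPd : ∀ i j, i < j → j < k → Disjoint (P i) (P j) := by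
    intro i j hij hjk
    rcases lt_trichotomy j a with hj | rfl | hj
    · rw [hPlt i (by omega), hPlt j hj]
      exact hfAd i j hij hj
    · rw [hPlt i hij, hPeq]
      refine disjoint_union_right.mpr ⟨?_, ?_⟩
      · exact disjoint_of_subset_left (hfAs i hij) sdiff_disjoint
      · exact disjoint_of_subset_left ((hfAs i hij).trans sdiff_subset)
          (disjoint_of_subset_right hSBs disjoint_compl_right)
    · rcases lt_trichotomy i a with hi | rfl | hi
      · rw [hPlt i hi, hPgt j hj]
        exact disjoint_of_subset_left ((hfAs i hi).trans sdiff_subset)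
          (disjoint_of_subset_right ((hfBs _ (by omega)).trans sdiff_subset)
            disjoint_compl_right)
      · rw [hPeq, hPgt j hj]
        refine disjoint_union_left.mpr ⟨?_, ?_⟩
        · exact disjoint_of_subset_left hSAs
            (disjoint_of_subset_right ((hfBs _ (by omega)).trans sdiff_subset)
              disjoint_compl_right)
        · exact disjoint_of_subset_right (hfBs (j - (a + 1)) (by omega)) sdiff_disjoint.symm
      · rw [hPgt i hi, hPgt j hj]
        exact hfBd _ _ (by omega) (by omega)
  have hPdisj : ∀ i j, i ≠ j → i < k → j < k → Disjoint (P i) (P j) := by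
    intro i j hne hik hjk
    rcases lt_or_gt_of_ne hne with h | h
    · exact hPd i j h hjk
    · exact (hPd j i h hik).symm
  have hcov : ∀ v : V, ∃ i, i < k ∧ v ∈ P i := by
    intro v
    by_cases hv : v ∈ A
    · by_cases hvs : v ∈ SA
      · exact ⟨a, hak, by rw [hPeq]; exact mem_union_left _ hvs⟩
      · obtain ⟨i, hi, hvi⟩ := hfAcov v (mem_sdiff.mpr ⟨hv, hvs⟩)
        exact ⟨i, by omega, by rw [hPlt i hi]; exact hvi⟩
    · have hv' : v ∈ Aᶜ := mem_compl.mpr hv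
      by_cases hvs : v ∈ SB
      · exact ⟨a, hak, by rw [hPeq]; exact mem_union_right _ hvs⟩
      · obtain ⟨i, hi, hvi⟩ := hfBcov v (mem_sdiff.mpr ⟨hv', hvs⟩)
        refine ⟨a + 1 + i, by omega, ?_⟩
        rw [hPgt _ (by omega), show a + 1 + i - (a + 1) = i by omega]
        exact hvi
  -- build the coloring
  classical
  let c : V → Fin k := fun v => ⟨Nat.find (hcov v), (Nat.find_spec (hcov v)).1⟩
  have hc_mem : ∀ v, v ∈ P ((c v) : ℕ) := fun v => (Nat.find_spec (hcov v)).2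
  have hc_lt : ∀ v, ((c v) : ℕ) < k := fun v => (Nat.find_spec (hcov v)).1
  have hc_iff : ∀ (v : V) (i : ℕ), i < k → (v ∈ P i ↔ ((c v) : ℕ) = i) := by
    intro v i hik
    constructor
    · intro hvi
      by_contra hne
      exact (Finset.disjoint_left.mp (hPdisj _ _ hne (hc_lt v) hik)) (hc_mem v) hvi
    · intro h; rw [← h]; exact hc_mem v
  have hfilter : ∀ i : Fin k, (Finset.univ.filter fun v => c v = i).card = d i.val := by
    intro i
    rw [← hPcard i.val i.isLt]
    congr 1
    ext v
    simp only [mem_filter, mem_univ, true_and]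
    rw [Fin.ext_iff]
    exact (hc_iff v i.val i.isLt).symm
  refine ⟨c, ?_, ?_⟩
  · intro u w hadj hcuw
    have h1 := hc_mem u
    have h2 := hc_mem w
    rw [hcuw] at h1
    exact hPstable _ (hc_lt w) u h1 w h2 hadj
  · intro i j
    rw [hfilter i, hfilter j]
    rw [hd_def]
    dsimp only
    split <;> split <;> omega

theorem stmt10 [Fintype V] [DecidableEq V] (T : SimpleGraph V)
    (hT : T.IsAcyclic) (hc : T.Connected) (hn : 2 ≤ Fintype.card V)
    (A : Finset V) (hA : IsStable T A) (hB : IsStable T Aᶜ)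
    (hAB : |(A.card : ℤ) - Aᶜ.card| ≤ 1) :
    ∀ k, 2 ≤ k → EquitablyColorable T k := by
  classical
  intro k hk
  have htree : T.IsTree := ⟨hc, hT⟩
  have hedge : T.edgeFinset.card + 1 = Fintype.card V := htree.card_edgeFinset
  have hsum2 : ∑ v : V, T.degree v = 2 * T.edgeFinset.card :=
    T.sum_degrees_eq_twice_card_edges
  have hdegB2 := degsum_side T A hA hB
  have hdegB : ∑ b ∈ Aᶜ, T.degree b + 1 = Fintype.card V := by omega
  have hBc : IsStable T Aᶜᶜ := by rw [compl_compl]; exact hA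
  have hdegA2 := degsum_side T Aᶜ hB hBc
  rw [compl_compl] at hdegA2
  have hdegA : ∑ b ∈ A, T.degree b + 1 = Fintype.card V := by omega
  rw [abs_le] at hAB
  have hbal1 : A.card ≤ Aᶜ.card + 1 := by omega
  have hbal2 : Aᶜ.card ≤ A.card + 1 := by omega
  rcases Nat.lt_or_ge k 3 with hk3 | hk3
  · -- k = 2 : use the bipartition itself
    have hk2 : k = 2 := by omega
    subst hk2
    set c : V → Fin 2 := fun v => if v ∈ A then 0 else 1 with hc_def
    have h0 : (Finset.univ.filter fun v => c v = 0) = A := by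
      ext v
      simp only [mem_filter, mem_univ, true_and, hc_def]
      by_cases hv : v ∈ A <;> simp [hv]
    have h1 : (Finset.univ.filter fun v => c v = 1) = Aᶜ := by
      ext v
      simp only [mem_filter, mem_univ, true_and, hc_def, mem_compl]
      by_cases hv : v ∈ A <;> simp [hv]
    refine ⟨c, ?_, ?_⟩
    · intro u w hadj heq
      by_cases hu : u ∈ A <;> by_cases hw : w ∈ A
      · exact hA u hu w hw hadj
      · simp [hc_def, hu, hw] at heq
      · simp [hc_def, hu, hw] at heq
      · exact hB u (mem_compl.mpr hu) w (mem_compl.mpr hw) hadj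
    · intro i j
      fin_cases i <;> fin_cases j <;> simp [h0, h1] <;> omega
  · -- k ≥ 3 : main construction, on the larger side
    rcases le_or_gt Aᶜ.card A.card with hcmp | hcmp
    · exact main_colorable T hn A hA hB hdegB hdegA hcmp hbal1 k hk3
    · have hdegB' : ∑ b ∈ Aᶜᶜ, T.degree b + 1 = Fintype.card V := by
        rw [compl_compl]; exact hdegA
      have hcmp' : Aᶜᶜ.card ≤ Aᶜ.card := by rw [compl_compl]; omega
      have hbal' : Aᶜ.card ≤ Aᶜᶜ.card + 1 := by rw [compl_compl]; omega
      exact main_colorable T hn Aᶜ hB hBc hdegB' hdegB hcmp' hbal' k hk3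
end

section
/- Let F be a forest of order n with bipartition (A,B), k ≥ 3, and suppose b = |B| < ⌊n/k⌋ and every vertex of A has a neighbor. If v ∈ B and R is an independent set containing v of size ⌊n/k⌋ chosen with |R ∩ B| minimum, and |R ∩ B| ≥ 2, then every leaf of F lying in A is either in R or adjacent to some vertex of R; consequently (B ∪ L) \ R is a stable set of size at least b + (a − b + 1) − ⌊n/k⌋, where L is the set of leaves in A and a = |A|. -/
open SimpleGraph Finset

variable {V : Type*}

section Helpers
variable {V : Type*} [Fintype V] [DecidableEq V] {G : SimpleGraph V}

private lemma cross_lemma {A : Finset V} (hA : IsStable G A) (hB : IsStable G Aᶜ)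
    {x y : V} (h : G.Adj x y) : (x ∈ A ↔ y ∉ A) := by
  constructor
  · intro hx hy; exact hA x hx y hy h
  · intro hy; by_contra hx
    exact hB x (Finset.mem_compl.2 hx) y (Finset.mem_compl.2 hy) h

private lemma walk_parity {A : Finset V} (hA : IsStable G A) (hB : IsStable G Aᶜ)
    {u w : V} (p : G.Walk u w) :
    (p.length : ZMod 2) = (if u ∈ A then 0 else 1) + (if w ∈ A then 0 else 1) := by
  induction p with
  | nil => split_ifs <;> simp [Walk.length_nil] <;> decide
  | @cons u u' w h q ih =>
    rw [SimpleGraph.Walk.length_cons]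
    push_cast
    rw [ih]
    have := cross_lemma hA hB h
    by_cases hu : u ∈ A
    · have hu' : u' ∉ A := this.mp hu
      simp only [if_pos hu, if_neg hu']
      ring_nf
      try split_ifs <;> first | rfl | decide
    · have hu' : u' ∈ A := by by_contra hc; exact hu (this.mpr hc)
      simp only [if_neg hu, if_pos hu']
      ring_nf
      try split_ifs <;> first | rfl | decide

private lemma dist_parity {A : Finset V} (hA : IsStable G A) (hB : IsStable G Aᶜ)
    {r x : V} (h : G.Reachable r x) :
    ((G.dist r x : ℕ) : ZMod 2) = (if r ∈ A then 0 else 1) + (if x ∈ A then 0 else 1) := by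
  obtain ⟨p, _, hl⟩ := h.exists_path_of_dist
  rw [← hl]; exact walk_parity hA hB p

private lemma unique_pred (hG : G.IsAcyclic) {r w z1 z2 : V}
    (h1 : G.Adj z1 w) (h2 : G.Adj z2 w) (hr1 : G.Reachable r z1) (hr2 : G.Reachable r z2)
    (hd1 : G.dist r z1 + 1 = G.dist r w) (hd2 : G.dist r z2 + 1 = G.dist r w) : z1 = z2 := by
  obtain ⟨p1, hp1, hl1⟩ := hr1.exists_path_of_dist
  obtain ⟨p2, hp2, hl2⟩ := hr2.exists_path_of_dist
  have hw1 : w ∉ p1.support := by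
    intro hw
    have h3 := SimpleGraph.dist_le (p1.takeUntil w hw)
    have h4 := p1.length_takeUntil_le hw
    omega
  have hw2 : w ∉ p2.support := by
    intro hw
    have h3 := SimpleGraph.dist_le (p2.takeUntil w hw)
    have h4 := p2.length_takeUntil_le hw
    omega
  have hq1 : (p1.concat h1).IsPath := by
    rw [← SimpleGraph.Walk.isPath_reverse_iff, SimpleGraph.Walk.reverse_concat]
    exact ((SimpleGraph.Walk.isPath_reverse_iff p1).2 hp1).cons
      (by simpa [SimpleGraph.Walk.support_reverse] using hw1)
  have hq2 : (p2.concat h2).IsPath := by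
    rw [← SimpleGraph.Walk.isPath_reverse_iff, SimpleGraph.Walk.reverse_concat]
    exact ((SimpleGraph.Walk.isPath_reverse_iff p2).2 hp2).cons
      (by simpa [SimpleGraph.Walk.support_reverse] using hw2)
  have heq : p1.concat h1 = p2.concat h2 := by
    have := hG.path_unique ⟨p1.concat h1, hq1⟩ ⟨p2.concat h2, hq2⟩
    exact Subtype.ext_iff.mp this
  have hsup : p1.support.concat w = p2.support.concat w := by
    have := congrArg SimpleGraph.Walk.support heq
    simpa [SimpleGraph.Walk.support_concat] using this
  have hsup' : p1.support = p2.support := by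
    simpa [List.concat_eq_append] using hsup
  have hz1 : p1.support.getLast (by simp) = z1 := p1.getLast_support
  have hz2 : p2.support.getLast (by simp) = z2 := p2.getLast_support
  rw [← hz1, ← hz2]
  congr 1

private lemma nat_key_lt {n a b i j : ℕ} (hi : i < n) (hj : j < n) (hab : a < b) :
    n * a + i < n * b + j := by
  have hs : n * (a + 1) = n * a + n := by ring
  have : n * a + i < n * (a + 1) := by omega
  have h2 : n * (a + 1) ≤ n * b := Nat.mul_le_mul_left n hab
  omega

private lemma nat_key_inj {n a b i j : ℕ} (hi : i < n) (hj : j < n)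
    (h : n * a + i = n * b + j) : a = b ∧ i = j := by
  have hab : a = b := by
    rcases lt_trichotomy a b with hl | hl | hl
    · exact absurd h (Nat.ne_of_lt (nat_key_lt hi hj hl))
    · exact hl
    · exact absurd h.symm (Nat.ne_of_lt (nat_key_lt hj hi hl))
  subst hab; exact ⟨rfl, by omega⟩

private lemma forest_edges [Nonempty V] [DecidableRel G.Adj] (hG : G.IsAcyclic)
    (A : Finset V) (hA : IsStable G A) (hB : IsStable G Aᶜ) :
    G.edgeFinset.card + 1 ≤ Fintype.card V := by
  classical
  set n := Fintype.card V with hn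
  set root : V → V := fun x => (G.connectedComponentMk x).out with hrootdef
  have hroot_reach : ∀ x, G.Reachable (root x) x := by
    intro x
    have : G.connectedComponentMk ((G.connectedComponentMk x).out) = G.connectedComponentMk x :=
      Quot.out_eq _
    exact SimpleGraph.ConnectedComponent.eq.mp this
  have hroot_eq : ∀ {x y : V}, G.Reachable x y → root x = root y := by
    intro x y h
    simp only [hrootdef]
    rw [SimpleGraph.ConnectedComponent.sound h]
  have hroot_idem : ∀ x, root (root x) = root x := fun x => hroot_eq (hroot_reach x)
  set idx : V → ℕ := fun x => ((Fintype.equivFin V) x : ℕ) with hidxdef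
  have hidx_lt : ∀ x, idx x < n := fun x => ((Fintype.equivFin V) x).isLt
  set key : V → ℕ := fun x => n * G.dist (root x) x + idx x with hkeydef
  have hkey_inj : Function.Injective key := by
    intro x y h
    obtain ⟨-, h2⟩ := nat_key_inj (hidx_lt x) (hidx_lt y) h
    exact (Fintype.equivFin V).injective (Fin.ext h2)
  have hg : ∀ x y : V, (if key x < key y then y else x) = (if key y < key x then x else y) := by
    intro x y
    rcases lt_trichotomy (key x) (key y) with h | h | h
    · rw [if_pos h, if_neg (asymm h)]
    · have : x = y := hkey_inj h
      subst this; rfl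
    · rw [if_neg (asymm h), if_pos h]
  set f : Sym2 V → V := Sym2.lift ⟨fun x y => if key x < key y then y else x, hg⟩ with hfdef
  -- parity: adjacent vertices have different dists to a common reachable root
  have hdist_ne : ∀ {r x y : V}, G.Reachable r x → G.Reachable r y → G.Adj x y →
      G.dist r x ≠ G.dist r y := by
    intro r x y hrx hry hxy h
    have p1 := dist_parity hA hB hrx
    have p2 := dist_parity hA hB hry
    rw [h] at p1
    have hxy' := cross_lemma hA hB hxy
    by_cases hx : x ∈ A
    · have hy : y ∉ A := hxy'.mp hx
      rw [if_pos hx] at p1; rw [if_neg hy] at p2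
      have := p1.symm.trans p2
      have := add_left_cancel this
      exact zero_ne_one this
    · have hy : y ∈ A := by by_contra hc; exact hx (hxy'.mpr hc)
      rw [if_neg hx] at p1; rw [if_pos hy] at p2
      have := p1.symm.trans p2
      have := add_left_cancel this
      exact one_ne_zero this
  have hedge : ∀ ⦃x y : V⦄, G.Adj x y → key x < key y →
      f s(x, y) = y ∧ G.dist (root y) x + 1 = G.dist (root y) y := by
    intro x y hxy hk
    have hrxy : root x = root y := hroot_eq hxy.reachable
    have hrx : G.Reachable (root y) x := hrxy ▸ hroot_reach x
    have hry : G.Reachable (root y) y := hroot_reach y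
    have hne : G.dist (root y) x ≠ G.dist (root y) y := hdist_ne hrx hry hxy
    have h1 : G.dist (root y) y ≤ G.dist (root y) x + 1 := by
      obtain ⟨p, -, hl⟩ := hrx.exists_path_of_dist
      have := SimpleGraph.dist_le (p.concat hxy)
      rwa [SimpleGraph.Walk.length_concat, hl] at this
    have hkx : key x = n * G.dist (root y) x + idx x := by simp only [hkeydef, hrxy]
    have hlt : G.dist (root y) x < G.dist (root y) y := by
      by_contra hc
      push_neg at hc
      have : G.dist (root y) y < G.dist (root y) x := lt_of_le_of_ne hc (Ne.symm hne)
      have := nat_key_lt (hidx_lt y) (hidx_lt x) this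
      rw [← hkx] at this
      change key y < key x at this
      omega
    constructor
    · show (if key x < key y then y else x) = y
      rw [if_pos hk]
    · omega
  have hprop : ∀ e ∈ G.edgeFinset, ∃ z, e = s(z, f e) ∧ G.Adj z (f e) ∧
      G.dist (root (f e)) z + 1 = G.dist (root (f e)) (f e) := by
    intro e he
    induction e using Sym2.ind with
    | _ x y =>
      rw [SimpleGraph.mem_edgeFinset, SimpleGraph.mem_edgeSet] at he
      have hne : key x ≠ key y := fun h => he.ne (hkey_inj h)
      rcases hne.lt_or_gt with hk | hk
      · obtain ⟨hf1, hf2⟩ := hedge he hk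
        exact ⟨x, by rw [hf1], by rw [hf1]; exact he, by rw [hf1]; exact hf2⟩
      · obtain ⟨hf1, hf2⟩ := hedge he.symm hk
        have hf1' : f s(x, y) = x := by rw [Sym2.eq_swap]; exact hf1
        exact ⟨y, by rw [hf1']; exact Sym2.eq_swap, by rw [hf1']; exact he.symm,
          by rw [hf1']; exact hf2⟩
  have r0 := root (Classical.arbitrary V)
  have himg : ∀ e ∈ G.edgeFinset, f e ∈ Finset.univ.erase (root (Classical.arbitrary V)) := by
    intro e he
    rw [Finset.mem_erase]
    refine ⟨?_, Finset.mem_univ _⟩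
    intro hc
    obtain ⟨z, -, -, hd⟩ := hprop e he
    rw [hc] at hd
    rw [hroot_idem, SimpleGraph.dist_self] at hd
    omega
  have hinj : Set.InjOn f ↑G.edgeFinset := by
    intro e1 h1 e2 h2 hf
    obtain ⟨z1, he1, ha1, hd1⟩ := hprop e1 h1
    obtain ⟨z2, he2, ha2, hd2⟩ := hprop e2 h2
    rw [hf] at he1 ha1 hd1
    have hz : z1 = z2 := by
      refine unique_pred hG ha1 ha2 ?_ ?_ hd1 hd2
      · exact (hroot_reach (f e2)).trans ha1.symm.reachable
      · exact (hroot_reach (f e2)).trans ha2.symm.reachable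
    rw [he1, hz, ← he2]
  have hcard := Finset.card_le_card_of_injOn f himg hinj
  rw [Finset.card_erase_of_mem (Finset.mem_univ _), Finset.card_univ] at hcard
  have hpos : 0 < n := Fintype.card_pos
  omega

private lemma degree_sum_le [DecidableRel G.Adj] {A : Finset V} (hA : IsStable G A) :
    ∑ x ∈ A, G.degree x ≤ G.edgeFinset.card := by
  classical
  have h1 : ∑ x ∈ A, G.degree x = (A.sigma fun x => G.neighborFinset x).card := by
    rw [Finset.card_sigma]
    rfl
  rw [h1]
  apply Finset.card_le_card_of_injOn (fun p : Σ _ : V, V => s(p.1, p.2))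
  · intro p hp
    rw [Finset.mem_coe, Finset.mem_sigma] at hp
    rw [Finset.mem_coe, SimpleGraph.mem_edgeFinset, SimpleGraph.mem_edgeSet]
    exact (SimpleGraph.mem_neighborFinset _ _ _).mp hp.2
  · intro p hp q hq h
    have hp' := Finset.mem_sigma.mp (Finset.mem_coe.mp hp)
    have hq' := Finset.mem_sigma.mp (Finset.mem_coe.mp hq)
    have hadjp : G.Adj p.1 p.2 := (SimpleGraph.mem_neighborFinset _ _ _).mp hp'.2
    rcases Sym2.eq_iff.mp h with ⟨e1, e2⟩ | ⟨e1, e2⟩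
    · exact Sigma.ext e1 (heq_of_eq e2)
    · exact absurd (e2 ▸ hadjp) (hA p.1 hp'.1 q.1 hq'.1)


end Helpers

theorem stmt14 [Fintype V] [DecidableEq V] (F : SimpleGraph V) [DecidableRel F.Adj]
    (hF : F.IsAcyclic)
    (A : Finset V) (hA : IsStable F A) (hB : IsStable F Aᶜ)
    (k : ℕ) (hk : 3 ≤ k)
    (hb : Aᶜ.card < Fintype.card V / k)
    (hiso : ∀ x ∈ A, 0 < F.degree x)
    (v : V) (hv : v ∈ Aᶜ)
    (R : Finset V) (hRs : IsStable F R) (hvR : v ∈ R)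
    (hRcard : R.card = Fintype.card V / k)
    (hmin : ∀ R' : Finset V, IsStable F R' → v ∈ R' → R'.card = Fintype.card V / k →
      (R ∩ Aᶜ).card ≤ (R' ∩ Aᶜ).card)
    (h2 : 2 ≤ (R ∩ Aᶜ).card) :
    (∀ x ∈ A.filter fun x => F.degree x = 1, x ∈ R ∨ ∃ y ∈ R, F.Adj x y) ∧
    IsStable F ((Aᶜ ∪ A.filter fun x => F.degree x = 1) \ R) ∧
    ((((Aᶜ ∪ A.filter fun x => F.degree x = 1) \ R).card : ℤ) ≥
      (Aᶜ.card : ℤ) + ((A.card : ℤ) - (Aᶜ.card : ℤ) + 1) -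
        ((Fintype.card V / k : ℕ) : ℤ)) := by 
  haveI : Nonempty V := ⟨v⟩
  have part1 : ∀ x ∈ A.filter fun x => F.degree x = 1, x ∈ R ∨ ∃ y ∈ R, F.Adj x y := by
    intro x hx
    rw [Finset.mem_filter] at hx
    by_contra hc
    push_neg at hc
    obtain ⟨hxR, hno⟩ := hc
    obtain ⟨u, hu, huv⟩ := Finset.exists_mem_ne (by omega : 1 < (R ∩ Aᶜ).card) v
    rw [Finset.mem_inter] at hu
    have hxA : x ∈ A := hx.1
    have hxAc : x ∉ Aᶜ := by simp [hxA]
    set R' := insert x (R.erase u) with hR'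
    have hstab : IsStable F R' := by
      intro p hp q hq
      rw [hR', Finset.mem_insert] at hp hq
      rcases hp with rfl | hp <;> rcases hq with rfl | hq
      · exact F.loopless.irrefl _
      · exact hno q (Finset.mem_of_mem_erase hq)
      · intro hadj; exact hno p (Finset.mem_of_mem_erase hp) hadj.symm
      · exact hRs p (Finset.mem_of_mem_erase hp) q (Finset.mem_of_mem_erase hq)
    have hvR' : v ∈ R' := Finset.mem_insert_of_mem (Finset.mem_erase.2 ⟨Ne.symm huv, hvR⟩)
    have hxe : x ∉ R.erase u := fun h => hxR (Finset.mem_of_mem_erase h)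
    have hcard' : R'.card = Fintype.card V / k := by
      rw [hR', Finset.card_insert_of_notMem hxe, Finset.card_erase_of_mem hu.1]
      have hpos : 0 < R.card := Finset.card_pos.2 ⟨v, hvR⟩
      omega
    have hm := hmin R' hstab hvR' hcard'
    have hint : R' ∩ Aᶜ = (R ∩ Aᶜ).erase u := by
      rw [hR', Finset.insert_inter_of_notMem hxAc, Finset.erase_inter]
    rw [hint, Finset.card_erase_of_mem (Finset.mem_inter.2 ⟨hu.1, hu.2⟩)] at hm
    omega
  refine ⟨part1, ?_, ?_⟩
  · intro p hp q hq hadj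
    rw [Finset.mem_sdiff, Finset.mem_union] at hp hq
    obtain ⟨hp1, hpR⟩ := hp
    obtain ⟨hq1, hqR⟩ := hq
    have key : ∀ z w : V, z ∈ A.filter (fun x => F.degree x = 1) → z ∉ R → F.Adj z w →
        w ∉ R → False := by
      intro z w hz hzR hzw hwR
      rcases part1 z hz with h | ⟨y, hyR, hy⟩
      · exact hzR h
      · have hdeg : (F.neighborFinset z).card ≤ 1 :=
          le_of_eq (Finset.mem_filter.mp hz).2
        have hyw : y = w :=
          Finset.card_le_one.mp hdeg y ((SimpleGraph.mem_neighborFinset _ _ _).mpr hy)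
            w ((SimpleGraph.mem_neighborFinset _ _ _).mpr hzw)
        exact hwR (hyw ▸ hyR)
    rcases hp1 with hpB | hpL <;> rcases hq1 with hqB | hqL
    · exact hB p hpB q hqB hadj
    · exact key q p hqL hqR hadj.symm hpR
    · exact key p q hpL hpR hadj hqR
    · exact hA p (Finset.mem_of_mem_filter p hpL) q (Finset.mem_of_mem_filter q hqL) hadj
  · set L := A.filter fun x => F.degree x = 1 with hLdef
    have hsum1 : ∑ x ∈ A, F.degree x ≤ F.edgeFinset.card := degree_sum_le hA
    have hedges : F.edgeFinset.card + 1 ≤ Fintype.card V := forest_edges hF A hA hB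
    have hsplit : (∑ x ∈ A.filter (fun x => F.degree x = 1), F.degree x) +
        ∑ x ∈ A.filter (fun x => ¬F.degree x = 1), F.degree x = ∑ x ∈ A, F.degree x :=
      Finset.sum_filter_add_sum_filter_not A _ _
    have hsumL : ∑ x ∈ A.filter (fun x => F.degree x = 1), F.degree x = L.card := by
      rw [Finset.sum_congr rfl (fun x hx => (Finset.mem_filter.mp hx).2)]
      simp [hLdef]
    have hsumN : 2 * (A.filter (fun x => ¬F.degree x = 1)).card ≤
        ∑ x ∈ A.filter (fun x => ¬F.degree x = 1), F.degree x := by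
      have h := Finset.card_nsmul_le_sum (A.filter (fun x => ¬F.degree x = 1)) (fun x => F.degree x) 2 ?_
      · simpa [smul_eq_mul, mul_comm] using h
      · intro x hx
        rw [Finset.mem_filter] at hx
        have h1 := hiso x hx.1
        have h2' := hx.2
        show 2 ≤ F.degree x
        omega
    have hcardsplit : L.card + (A.filter fun x => ¬F.degree x = 1).card = A.card :=
      Finset.card_filter_add_card_filter_not _
    have hn : A.card + Aᶜ.card = Fintype.card V := Finset.card_add_card_compl A
    have hdisj : Disjoint Aᶜ L := by
      rw [Finset.disjoint_left]
      intro z hz hzL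
      exact (Finset.mem_compl.mp hz) (Finset.mem_of_mem_filter z hzL)
    have hucard : (Aᶜ ∪ L).card = Aᶜ.card + L.card := Finset.card_union_of_disjoint hdisj
    have hsub : (Aᶜ ∪ L) ⊆ ((Aᶜ ∪ L) \ R) ∪ R := by
      intro z hz
      rw [Finset.mem_union, Finset.mem_sdiff]
      by_cases hzR : z ∈ R
      · exact Or.inr hzR
      · exact Or.inl ⟨hz, hzR⟩
    have hle := (Finset.card_le_card hsub).trans (Finset.card_union_le _ _)
    rw [← hRcard]
    rw [hucard] at hle
    omega
end
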